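/- Let θ ∈ (π/2, π) and r > 0. Define the vectors R₁ = ((1/r)·cos θ, 1, (2/√r + √r)·cos(θ/2), (1/√r)·cos(θ/2)) and R₂ = (−(1/r)·sin θ, 0, (√r − 2/√r)·sin(θ/2), −(1/√r)·sin(θ/2)) in ℝ⁴. If c₁, c₂ ∈ ℝ are such that c₁ R₁ + c₂ R₂ lies in the span of e₂ = (0,1,0,0) and e₃ = (0,0,1,0), then c₁ = c₂ = 0. Consequently, span{R₁, R₂} ∩ span{e₂, e₃} = {0}. -/
import Mathlib


open Real

/-- The first basis vector `R₁` of the unstable eigenspace of `B_∞(λ)`. -/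
noncomputable def Runst₁ (θ r : ℝ) : Fin 4 → ℝ :=
  ![(1 / r) * cos θ, 1, (2 / Real.sqrt r + Real.sqrt r) * cos (θ / 2),
    (1 / Real.sqrt r) * cos (θ / 2)]

/-- The second basis vector `R₂` of the unstable eigenspace of `B_∞(λ)`. -/
noncomputable def Runst₂ (θ r : ℝ) : Fin 4 → ℝ :=
  ![-(1 / r) * sin θ, 0, (Real.sqrt r - 2 / Real.sqrt r) * sin (θ / 2),
    -(1 / Real.sqrt r) * sin (θ / 2)]

/-- If `θ ∈ (π/2, π)` and `r > 0`, a combination `c₁ R₁ + c₂ R₂` lies in the span of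
`e₂, e₃` only if `c₁ = c₂ = 0`; consequently `span{R₁, R₂} ∩ span{e₂, e₃} = {0}`. -/
theorem stmt_8 (θ r : ℝ) (hθ : θ ∈ Set.Ioo (π / 2) π) (hr : 0 < r) :
    (∀ c₁ c₂ : ℝ,
      c₁ • Runst₁ θ r + c₂ • Runst₂ θ r ∈
        Submodule.span ℝ ({![0,1,0,0], ![0,0,1,0]} : Set (Fin 4 → ℝ)) →
      c₁ = 0 ∧ c₂ = 0) ∧
    Submodule.span ℝ ({Runst₁ θ r, Runst₂ θ r} : Set (Fin 4 → ℝ)) ⊓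
      Submodule.span ℝ ({![0,1,0,0], ![0,0,1,0]} : Set (Fin 4 → ℝ)) = ⊥ := by
  obtain ⟨hθ1, hθ2⟩ := hθ
  have hπ := Real.pi_pos
  have hA : cos θ < 0 := Real.cos_neg_of_pi_div_two_lt_of_lt hθ1 (by linarith)
  have hB : 0 < sin θ := Real.sin_pos_of_pos_of_lt_pi (by linarith) hθ2
  have hC : 0 < cos (θ / 2) := Real.cos_pos_of_mem_Ioo ⟨by linarith, by linarith⟩
  have hD : 0 < sin (θ / 2) := Real.sin_pos_of_pos_of_lt_pi (by linarith) (by linarith)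
  have hs : 0 < Real.sqrt r := Real.sqrt_pos.mpr hr
  have key : ∀ c₁ c₂ : ℝ,
      c₁ • Runst₁ θ r + c₂ • Runst₂ θ r ∈
        Submodule.span ℝ ({![0,1,0,0], ![0,0,1,0]} : Set (Fin 4 → ℝ)) →
      c₁ = 0 ∧ c₂ = 0 := by
    intro c₁ c₂ hmem
    rw [Submodule.mem_span_pair] at hmem
    obtain ⟨s, t, hst⟩ := hmem
    have h0 := congrFun hst 0
    have h3 := congrFun hst 3
    simp [Runst₁, Runst₂] at h0 h3
    -- h0 : s*0+t*0 = c₁*(1/r*cosθ) + c₂*(-(1/r)*sinθ) form; extract equations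
    have e0 : c₁ * cos θ = c₂ * sin θ := by
      field_simp at h0
      linarith
    have e3 : c₁ * cos (θ / 2) = c₂ * sin (θ / 2) := by
      field_simp at h3
      nlinarith [hs.ne']
    have hc2 : c₂ = 0 := by
      rcases lt_trichotomy c₂ 0 with h | h | h
      · have hc1 : c₁ < 0 := by nlinarith
        nlinarith
      · exact h
      · have hc1 : 0 < c₁ := by nlinarith
        nlinarith
    constructor
    · have : c₁ * cos (θ / 2) = 0 := by rw [e3, hc2]; ring
      rcases mul_eq_zero.mp this with h | h
      · exact h
      · exact absurd h hC.ne'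
    · exact hc2
  refine ⟨key, ?_⟩
  rw [eq_bot_iff]
  rintro x hx
  rw [Submodule.mem_inf] at hx
  obtain ⟨hx1, hx2⟩ := hx
  rw [Submodule.mem_span_pair] at hx1
  obtain ⟨c₁, c₂, hc⟩ := hx1
  rw [← hc] at hx2 ⊢
  obtain ⟨h1, h2⟩ := key c₁ c₂ hx2
  simp [h1, h2, Submodule.mem_bot]
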